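/- For complex z, w with |z|, |w| sufficiently large, the double series ∑_{k,m ≥ 0} M_{2k+1,2m+1}(Ω) z^{-2k-2} \bar{w}^{-2m-2}, where M_{2k+1,2m+1}(Ω) = (1/(2(k+m+2))) C(k+m+2, k+1), converges and equals -(1/2) log(1 - 1/((z²-1)(\bar{w}²-1))). -/

import Mathlib

/-! With `u = z⁻²` and `v = conj(w)⁻²` the summand is `M_{2k+1,2m+1} u^(k+1) v^(m+1)`. On the
antidiagonal `k + m = n` the moments are the binomial coefficients `C(n+2, k+1)` divided by
`2(n+2)`, so the `n`-th diagonal sum is `((u+v)^(n+2) - u^(n+2) - v^(n+2)) / (2(n+2))`. Summing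
over `n` with `-log(1 - x) = ∑ xⁿ/n` gives `-(1/2)(log(1-u-v) - log(1-u) - log(1-v))`, which is
`-(1/2) log((1-u-v)/((1-u)(1-v)))` since all three arguments have positive real part for
`|u|, |v| < 1/4`; finally `(1-u-v)/((1-u)(1-v)) = 1 - 1/((z²-1)(conj(w)²-1))`. -/

set_option autoImplicit false

open Real

/-- The odd-odd complex moments of the Bernoulli lemniscate:
`M_{2k+1,2m+1} = (1/(2(k+m+2))) * C(k+m+2, k+1)`. -/
noncomputable def oddMoment (k m : ℕ) : ℂ :=
  ((1 : ℂ) / (2 * ((k : ℂ) + m + 2))) * (Nat.choose (k + m + 2) (k + 1) : ℂ)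

open Finset

theorem HasSum.of_sum_antidiagonal {A α : Type*} [AddCommMonoid A] [HasAntidiagonal A]
    [AddCommMonoid α] [TopologicalSpace α] [ContinuousAdd α] [T3Space α]
    {f : A × A → α} {a : α} (ha : HasSum (fun n => ∑ kl ∈ antidiagonal n, f kl) a)
    (hf : Summable f) : HasSum f a := by
  rw [← HasAntidiagonal.sigmaAntidiagonalEquivProd.hasSum_iff]
  refine ha.sigma_of_hasSum (fun n => ?_)
    (HasAntidiagonal.sigmaAntidiagonalEquivProd.summable_iff.mpr hf)
  exact (antidiagonal n).hasSum (fun kl => f kl)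

namespace Complex

theorem re_one_sub_pos {u : ℂ} (hu : ‖u‖ < 1) : 0 < (1 - u).re := by
  simp only [sub_re, one_re]
  linarith [re_le_norm u]

theorem log_mul_of_re_pos {x y : ℂ} (hx : 0 < x.re) (hy : 0 < y.re) :
    log (x * y) = log x + log y := by
  have hx' := abs_lt.mp (abs_arg_lt_pi_div_two_iff.mpr (Or.inl hx))
  have hy' := abs_lt.mp (abs_arg_lt_pi_div_two_iff.mpr (Or.inl hy))
  refine log_mul (ne_of_apply_ne re hx.ne') (ne_of_apply_ne re hy.ne') ⟨?_, ?_⟩ <;>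
    linarith [pi_pos]

theorem log_div_of_re_pos {x y : ℂ} (hx : 0 < x.re) (hy : 0 < y.re) :
    log (x / y) = log x - log y := by
  have hy₀ : y ≠ 0 := ne_of_apply_ne re hy.ne'
  have hy_inv : 0 < y⁻¹.re := by rw [inv_re]; exact div_pos hy (normSq_pos.mpr hy₀)
  have hy_arg : y.arg ≠ π := fun h => (arg_eq_pi_iff.mp h).1.not_gt hy
  rw [div_eq_mul_inv, log_mul_of_re_pos hx hy_inv, log_inv y hy_arg, sub_eq_add_neg]

theorem hasSum_add_pow_sub_pow_sub_pow_div {u v : ℂ} (h : ‖u‖ + ‖v‖ < 1) :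
    HasSum (fun n : ℕ => ((u + v) ^ (n + 2) - u ^ (n + 2) - v ^ (n + 2)) / (2 * (n + 2)))
      (-(1 / 2) * (log (1 - (u + v)) - log (1 - u) - log (1 - v))) := by
  have huv : ‖u + v‖ < 1 := (norm_add_le u v).trans_lt h
  have hu : ‖u‖ < 1 := by linarith [norm_nonneg v]
  have hv : ‖v‖ < 1 := by linarith [norm_nonneg u]
  have hlog := (((hasSum_taylorSeries_neg_log huv).sub (hasSum_taylorSeries_neg_log hu)).sub
    (hasSum_taylorSeries_neg_log hv)).div_const 2
  rw [← hasSum_nat_add_iff' 2] at hlog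
  have hvalue : -(1 / 2) * (log (1 - (u + v)) - log (1 - u) - log (1 - v)) =
      (-log (1 - (u + v)) - -log (1 - u) - -log (1 - v)) / 2 -
        ∑ i ∈ range 2, ((u + v) ^ i / i - u ^ i / i - v ^ i / i) / 2 := by
    -- the terms `i = 0, 1` vanish
    simp only [sum_range_succ, range_one, sum_singleton, pow_zero, pow_one, Nat.cast_zero,
      Nat.cast_one, div_zero, div_one, sub_self, zero_div, add_sub_cancel_left, add_zero, sub_zero]
    ring
  rw [hvalue]
  refine hlog.congr_fun fun n => ?_
  push_cast
  field_simp

end Complex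

theorem sum_antidiagonal_choose_succ_mul_pow {R : Type*} [CommSemiring R] (u v : R) (n : ℕ) :
    ∑ kl ∈ antidiagonal n, ((n + 2).choose (kl.1 + 1) : R) * u ^ (kl.1 + 1) * v ^ (kl.2 + 1) +
      u ^ (n + 2) + v ^ (n + 2) = (u + v) ^ (n + 2) := by
  rw [(Commute.all u v).add_pow', Nat.sum_antidiagonal_succ, Nat.sum_antidiagonal_succ']
  simp only [nsmul_eq_mul, Nat.choose_zero_right, Nat.choose_self, Nat.cast_one, pow_zero,
    one_mul, mul_one, mul_assoc]
  ring

theorem sum_antidiagonal_oddMoment_mul_pow (u v : ℂ) (n : ℕ) :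
    ∑ kl ∈ antidiagonal n, oddMoment kl.1 kl.2 * u ^ (kl.1 + 1) * v ^ (kl.2 + 1) =
      ((u + v) ^ (n + 2) - u ^ (n + 2) - v ^ (n + 2)) / (2 * (n + 2)) := by
  rw [← sum_antidiagonal_choose_succ_mul_pow u v n, sub_sub, add_assoc, add_sub_cancel_right,
    sum_div]
  refine sum_congr rfl fun kl hkl => ?_
  rw [HasAntidiagonal.mem_antidiagonal] at hkl
  subst hkl
  simp only [oddMoment, Nat.cast_add]
  ring

theorem norm_oddMoment_le (k m : ℕ) : ‖oddMoment k m‖ ≤ 2 ^ (k + m + 2) := by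
  have hcast : 2 * ((k : ℂ) + m + 2) = ((2 * (k + m + 2) : ℕ) : ℂ) := by push_cast; ring
  rw [oddMoment, hcast, one_div_mul_eq_div, norm_div, Complex.norm_natCast, Complex.norm_natCast]
  calc ((k + m + 2).choose (k + 1) : ℝ) / (2 * (k + m + 2) : ℕ)
      ≤ (k + m + 2).choose (k + 1) := div_le_self (Nat.cast_nonneg _) (by norm_cast; omega)
    _ ≤ 2 ^ (k + m + 2) := by exact_mod_cast Nat.choose_le_two_pow _ _

theorem summable_oddMoment_mul_pow {u v : ℂ} (hu : ‖u‖ < 1 / 2) (hv : ‖v‖ < 1 / 2) :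
    Summable fun p : ℕ × ℕ => oddMoment p.1 p.2 * u ^ (p.1 + 1) * v ^ (p.2 + 1) := by
  have hgeom {x : ℂ} (hx : ‖x‖ < 1 / 2) : Summable fun k : ℕ => (2 * ‖x‖) ^ (k + 1) :=
    (summable_nat_add_iff 1).mpr (summable_geometric_of_lt_one (by positivity) (by linarith))
  refine .of_norm_bounded ((hgeom hu).mul_of_nonneg (hgeom hv) (fun _ => by positivity)
    (fun _ => by positivity)) fun ⟨k, m⟩ => ?_
  calc ‖oddMoment k m * u ^ (k + 1) * v ^ (m + 1)‖
      = ‖oddMoment k m‖ * ‖u‖ ^ (k + 1) * ‖v‖ ^ (m + 1) := by simp only [norm_mul, norm_pow]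
    _ ≤ 2 ^ (k + m + 2) * ‖u‖ ^ (k + 1) * ‖v‖ ^ (m + 1) := by gcongr; exact norm_oddMoment_le k m
    _ = (2 * ‖u‖) ^ (k + 1) * (2 * ‖v‖) ^ (m + 1) := by ring

theorem hasSum_oddMoment_mul_pow {u v : ℂ} (hu : ‖u‖ < 1 / 4) (hv : ‖v‖ < 1 / 4) :
    HasSum (fun p : ℕ × ℕ => oddMoment p.1 p.2 * u ^ (p.1 + 1) * v ^ (p.2 + 1))
      (-(1 / 2) * Complex.log ((1 - (u + v)) / ((1 - u) * (1 - v)))) := by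
  have hu₀ := norm_nonneg u
  have hv₀ := norm_nonneg v
  have hre_uv : 0 < (1 - (u + v)).re :=
    Complex.re_one_sub_pos ((norm_add_le u v).trans_lt (by linarith))
  have hre_prod : 0 < ((1 - u) * (1 - v)).re := by
    rw [show (1 - u) * (1 - v) = 1 - (u + v - u * v) by ring]
    refine Complex.re_one_sub_pos ((norm_sub_le _ _).trans_lt ?_)
    rw [norm_mul]
    nlinarith [norm_add_le u v]
  rw [Complex.log_div_of_re_pos hre_uv hre_prod, Complex.log_mul_of_re_pos
    (Complex.re_one_sub_pos (by linarith)) (Complex.re_one_sub_pos (by linarith)), ← sub_sub]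
  have hseries := Complex.hasSum_add_pow_sub_pow_sub_pow_div (u := u) (v := v) (by linarith)
  rw [← funext (sum_antidiagonal_oddMoment_mul_pow u v)] at hseries
  exact hseries.of_sum_antidiagonal (summable_oddMoment_mul_pow (by linarith) (by linarith))

theorem hasSum_oddMoment_inv_pow {a b : ℂ} (ha : 4 < ‖a‖) (hb : 4 < ‖b‖) :
    HasSum (fun p : ℕ × ℕ => oddMoment p.1 p.2 * (a ^ (p.1 + 1))⁻¹ * (b ^ (p.2 + 1))⁻¹)
      (-(1 / 2) * Complex.log (1 - 1 / ((a - 1) * (b - 1)))) := by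
  have hinv {x : ℂ} (hx : 4 < ‖x‖) : ‖x⁻¹‖ < 1 / 4 := by
    rw [norm_inv, one_div]
    exact inv_strictAnti₀ (by norm_num) hx
  have hne {x : ℂ} (hx : 4 < ‖x‖) : x ≠ 0 ∧ x - 1 ≠ 0 := by
    refine ⟨norm_pos_iff.mp (by linarith), sub_ne_zero.mpr fun h => ?_⟩
    rw [h, norm_one] at hx
    linarith
  obtain ⟨ha₀, ha₁⟩ := hne ha
  obtain ⟨hb₀, hb₁⟩ := hne hb
  have hlog_arg : 1 - 1 / ((a - 1) * (b - 1)) = (1 - (a⁻¹ + b⁻¹)) / ((1 - a⁻¹) * (1 - b⁻¹)) := by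
    field_simp
    ring
  simpa only [hlog_arg, inv_pow] using hasSum_oddMoment_mul_pow (hinv ha) (hinv hb)

/-- For `|z|, |w|` sufficiently large, the double series
`∑ M_{2k+1,2m+1} z^{-2k-2} conj(w)^{-2m-2}` converges and equals
`-(1/2) log(1 - 1/((z²-1)(conj(w)²-1)))`. -/
theorem bernoulli_odd_series :
    ∃ R : ℝ, 0 < R ∧ ∀ z w : ℂ, R < ‖z‖ → R < ‖w‖ →
      HasSum
        (fun p : ℕ × ℕ =>
          oddMoment p.1 p.2 * (z ^ (2 * p.1 + 2))⁻¹ * ((starRingEnd ℂ w) ^ (2 * p.2 + 2))⁻¹)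
        (-(1 / 2) * Complex.log (1 - 1 / ((z ^ 2 - 1) * ((starRingEnd ℂ w) ^ 2 - 1)))) := by
  refine ⟨2, two_pos, fun z w hz hw => ?_⟩
  have hsq {x : ℂ} (hx : 2 < ‖x‖) : 4 < ‖x ^ 2‖ := by
    rw [norm_pow]
    nlinarith
  have hpow (x : ℂ) (k : ℕ) : x ^ (2 * k + 2) = (x ^ 2) ^ (k + 1) := by ring
  simpa only [hpow] using
    hasSum_oddMoment_inv_pow (hsq hz) (hsq (by rwa [Complex.norm_conj]))
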